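/- For every fixed t ∈ ℝ the Gauss–Hermite wave packets are orthonormal in L²(ℝ, dQ): for all n, m ∈ ℕ, ∫_ℝ conj(χ_n(t,Q))·χ_m(t,Q) dQ equals 1 if n = m and 0 otherwise; in particular ∫_ℝ |χ_n(t,Q)|² dQ = 1 at all times t. -/

import Mathlib

open MeasureTheory

/-- Probabilists' Hermite polynomial `He_n(y) = (−1)^n·e^{y²/2}·(d/dy)^n e^{−y²/2}`. -/
noncomputable def He (n : ℕ) (y : ℝ) : ℝ :=
  (-1) ^ n * Real.exp (y ^ 2 / 2) *
    iteratedDeriv n (fun z : ℝ => Real.exp (-(z ^ 2) / 2)) y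

/-- Time-dependent variance `σ(t) = σ·√(1 + t²/τ²)` with `σ = √(τ/(2M))`. -/
noncomputable def sigmaT (M τ t : ℝ) : ℝ :=
  Real.sqrt (τ / (2 * M)) * Real.sqrt (1 + t ^ 2 / τ ^ 2)

/-- Gauss–Hermite wave packet `χ_n(t,Q)`. -/
noncomputable def chi (M τ : ℝ) (n : ℕ) (t Q : ℝ) : ℂ :=
  ((1 / Real.sqrt ((n.factorial : ℝ) * Real.sqrt (2 * Real.pi)) : ℝ) : ℂ) *
  ((1 / Real.sqrt (sigmaT M τ t) : ℝ) : ℂ) *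
  Complex.exp (-(Complex.I * (2 * (n : ℂ) + 1) * (Real.arctan (t / τ) : ℂ) / 2)) *
  Complex.exp (Complex.I * (t : ℂ) * (Q : ℂ) ^ 2 / (4 * (τ : ℂ) * (sigmaT M τ t : ℂ) ^ 2)
    - ((Q ^ 2 / (4 * (sigmaT M τ t) ^ 2) : ℝ) : ℂ)) *
  ((He n (Q / sigmaT M τ t) : ℝ) : ℂ)

namespace ChiAux

open Polynomial Real

/-- The standard Gaussian (up to normalization). -/
noncomputable def g (y : ℝ) : ℝ := Real.exp (-(y ^ 2 / 2))

lemma hg (n : ℕ) (x : ℝ) :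
    deriv^[n] g x = (-1 : ℝ) ^ n * aeval x (hermite n) * g x :=
  Polynomial.deriv_gaussian_eq_hermite_mul_gaussian n x

lemma He_eq (n : ℕ) (y : ℝ) : He n y = aeval y (hermite n) := by
  have hfun : (fun z : ℝ => Real.exp (-(z ^ 2) / 2)) = g := by
    funext z; simp [g, neg_div]
  rw [He, hfun, iteratedDeriv_eq_iterate, hg, g]
  have hexp : Real.exp (y ^ 2 / 2) * Real.exp (-(y ^ 2 / 2)) = 1 := by
    rw [← Real.exp_add]; simp
  have hc : (-1 : ℝ) ^ n * (-1) ^ n = 1 := by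
    rw [← pow_add]; exact Even.neg_one_pow ⟨n, rfl⟩
  linear_combination ((-1 : ℝ) ^ n * (-1) ^ n * aeval y (hermite n)) * hexp
    + (aeval y (hermite n)) * hc

lemma int_pow_g (n : ℕ) : Integrable (fun x : ℝ => x ^ n * g x) := by
  have h := integrable_rpow_mul_exp_neg_mul_sq (b := (1:ℝ)/2) (by norm_num)
    (s := (n : ℝ)) (by have := Nat.cast_nonneg (α := ℝ) n; linarith)
  simp_rw [Real.rpow_natCast] at h
  refine h.congr ?_
  filter_upwards with x
  simp only [g]; ring_nf

lemma int_poly_g (p : ℝ[X]) : Integrable (fun x : ℝ => aeval x p * g x) := by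
  induction p using Polynomial.induction_on' with
  | monomial k a =>
      simpa [aeval_monomial, mul_assoc] using (int_pow_g k).const_mul a
  | add p q hp hq => simpa [add_mul, Pi.add_def] using hp.add hq

lemma hasDerivAt_g (x : ℝ) : HasDerivAt g (-x * g x) x := by
  have h : HasDerivAt (fun y : ℝ => -(y ^ 2 / 2)) (-x) x := by
    have := ((hasDerivAt_pow 2 x).div_const 2).neg
    exact this.congr_deriv (by ring)
  show HasDerivAt (fun y => Real.exp (-(y ^ 2 / 2))) _ x
  simpa [g, mul_comm] using h.exp

lemma hasDerivAt_iter_g (m : ℕ) (x : ℝ) :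
    HasDerivAt (deriv^[m] g) (deriv^[m + 1] g x) x := by
  have hfun : deriv^[m] g = fun y => (-1 : ℝ) ^ m * aeval y (hermite m) * g y :=
    funext fun y => hg m y
  rw [hfun, hg (m + 1) x]
  have h1 : HasDerivAt (fun y : ℝ => aeval y (hermite m)) (aeval x (derivative (hermite m))) x :=
    (hermite m).hasDerivAt_aeval x
  have h2 := ((h1.mul (hasDerivAt_g x)).const_mul ((-1 : ℝ) ^ m))
  have h3 : (fun y => (-1 : ℝ) ^ m * aeval y (hermite m) * g y)
      = fun y => (-1 : ℝ) ^ m * (aeval y (hermite m) * g y) := by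
    funext y; ring
  rw [h3]
  refine h2.congr_deriv ?_
  rw [hermite_succ]
  simp [pow_succ]
  ring

lemma int_poly_iter_g (p : ℝ[X]) (m : ℕ) :
    Integrable (fun x : ℝ => aeval x p * deriv^[m] g x) := by
  have h := (int_poly_g (p * (hermite m).map (algebraMap ℤ ℝ))).const_mul ((-1 : ℝ) ^ m)
  refine h.congr ?_
  filter_upwards with x
  rw [hg m x, map_mul, aeval_map_algebraMap]
  ring

lemma parts_step (p : ℝ[X]) (m : ℕ) :
    ∫ x : ℝ, aeval x p * deriv^[m + 1] g x
      = -∫ x : ℝ, aeval x (derivative p) * deriv^[m] g x := by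
  exact MeasureTheory.integral_mul_deriv_eq_deriv_mul_of_integrable
    (fun x _ => p.hasDerivAt_aeval x) (fun x _ => hasDerivAt_iter_g m x)
    (int_poly_iter_g p (m + 1)) (int_poly_iter_g (derivative p) m)
    (int_poly_iter_g p m)

lemma parts_iter (m : ℕ) : ∀ p : ℝ[X],
    ∫ x : ℝ, aeval x p * deriv^[m] g x
      = (-1 : ℝ) ^ m * ∫ x : ℝ, aeval x (derivative^[m] p) * g x := by
  induction m with
  | zero => intro p; simp
  | succ m ih =>
      intro p
      rw [parts_step p m, ih (derivative p), ← Function.iterate_succ_apply]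
      ring

lemma integral_g : ∫ x : ℝ, g x = Real.sqrt (2 * Real.pi) := by
  have h := integral_gaussian (1/2 : ℝ)
  have hfun : (fun x : ℝ => Real.exp (-(1/2 : ℝ) * x ^ 2)) = g := by
    funext x; simp [g]; ring_nf
  rw [hfun] at h
  rw [h]
  rw [show Real.pi / (1/2) = 2 * Real.pi by ring]

lemma herm_reduce (n m : ℕ) :
    ∫ x : ℝ, aeval x (hermite n) * aeval x (hermite m) * g x
      = ∫ x : ℝ, aeval x (derivative^[m] ((hermite n).map (algebraMap ℤ ℝ))) * g x := by
  have key : (fun x : ℝ => aeval x (hermite n) * aeval x (hermite m) * g x)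
      = fun x : ℝ => (-1 : ℝ) ^ m *
        (aeval x ((hermite n).map (algebraMap ℤ ℝ)) * deriv^[m] g x) := by
    funext x
    rw [hg m x, aeval_map_algebraMap]
    have h1 : ((-1 : ℝ) ^ m) ^ 2 = 1 := by
      rw [← pow_mul, mul_comm, pow_mul]; simp
    linear_combination (-(aeval x (hermite n) * aeval x (hermite m) * g x)) * h1
  rw [key, integral_const_mul, parts_iter m, ← mul_assoc]
  have h2 : (-1 : ℝ) ^ m * (-1) ^ m = 1 := by
    rw [← pow_add]; exact Even.neg_one_pow ⟨m, rfl⟩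
  rw [h2, one_mul]

lemma herm_lt (n m : ℕ) (h : n < m) :
    ∫ x : ℝ, aeval x (hermite n) * aeval x (hermite m) * g x = 0 := by
  rw [herm_reduce, Polynomial.iterate_derivative_eq_zero]
  · simp
  · rwa [(hermite_monic n).natDegree_map, natDegree_hermite]

lemma herm_self (n : ℕ) :
    ∫ x : ℝ, aeval x (hermite n) * aeval x (hermite n) * g x
      = (n.factorial : ℝ) * Real.sqrt (2 * Real.pi) := by
  rw [herm_reduce]
  have hdeg : (derivative^[n] ((hermite n).map (algebraMap ℤ ℝ))).natDegree = 0 := by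
    have := natDegree_iterate_derivative ((hermite n).map (algebraMap ℤ ℝ)) n
    rw [(hermite_monic n).natDegree_map, natDegree_hermite] at this
    omega
  have hC : derivative^[n] ((hermite n).map (algebraMap ℤ ℝ))
      = C ((n.factorial : ℝ)) := by
    rw [Polynomial.eq_C_of_natDegree_eq_zero hdeg]
    congr 1
    rw [coeff_iterate_derivative]
    simp [coeff_map, coeff_hermite_self, Nat.descFactorial_self]
  rw [hC]
  simp [integral_const_mul, integral_g]

lemma herm_orth (n m : ℕ) :
    ∫ x : ℝ, aeval x (hermite n) * aeval x (hermite m) * g x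
      = if n = m then (n.factorial : ℝ) * Real.sqrt (2 * Real.pi) else 0 := by
  rcases lt_trichotomy n m with h | h | h
  · rw [if_neg h.ne, herm_lt n m h]
  · rw [if_pos h, h, herm_self]
  · rw [if_neg h.ne']
    have heq : (fun x : ℝ => aeval x (hermite n) * aeval x (hermite m) * g x)
        = fun x : ℝ => aeval x (hermite m) * aeval x (hermite n) * g x := by
      funext x; ring
    rw [heq, herm_lt m n h]

lemma int_herm_mul_g (n m : ℕ) :
    Integrable (fun y : ℝ => aeval y (hermite n) * aeval y (hermite m) * g y) := by
  have h := int_poly_g (((hermite n) * (hermite m)).map (algebraMap ℤ ℝ))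
  refine h.congr ?_
  filter_upwards with x
  rw [aeval_map_algebraMap, map_mul]

lemma chi_mul (M τ t : ℝ) (n m : ℕ) (Q : ℝ) (hs : 0 < sigmaT M τ t) :
    (starRingEnd ℂ) (chi M τ n t Q) * chi M τ m t Q =
      Complex.exp (Complex.I * ((n : ℂ) - (m : ℂ)) * (Real.arctan (t / τ) : ℂ)) *
      (((1 / Real.sqrt ((n.factorial : ℝ) * Real.sqrt (2 * Real.pi))) *
        (1 / Real.sqrt ((m.factorial : ℝ) * Real.sqrt (2 * Real.pi))) *
        (1 / sigmaT M τ t) *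
        (He n (Q / sigmaT M τ t) * He m (Q / sigmaT M τ t) *
          Real.exp (-(Q ^ 2 / (2 * (sigmaT M τ t) ^ 2)))) : ℝ) : ℂ) := by
  set s := sigmaT M τ t with hs_def
  set α := Real.arctan (t / τ) with hα
  have hsC : (s : ℂ) ≠ 0 := Complex.ofReal_ne_zero.2 hs.ne'
  unfold chi
  rw [map_mul, map_mul, map_mul, map_mul, Complex.conj_ofReal, Complex.conj_ofReal,
    Complex.conj_ofReal, ← Complex.exp_conj, ← Complex.exp_conj]
  have e1 : (starRingEnd ℂ) (-(Complex.I * (2 * (n : ℂ) + 1) * (α : ℂ) / 2))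
      = Complex.I * (2 * (n : ℂ) + 1) * (α : ℂ) / 2 := by
    simp [map_div₀, Complex.conj_I, map_ofNat]
    ring
  have e2 : (starRingEnd ℂ) (Complex.I * (t : ℂ) * (Q : ℂ) ^ 2 / (4 * (τ : ℂ) * (s : ℂ) ^ 2)
      - ((Q ^ 2 / (4 * s ^ 2) : ℝ) : ℂ))
      = -(Complex.I * (t : ℂ) * (Q : ℂ) ^ 2 / (4 * (τ : ℂ) * (s : ℂ) ^ 2))
        - ((Q ^ 2 / (4 * s ^ 2) : ℝ) : ℂ) := by
    simp [map_div₀, Complex.conj_I, map_ofNat]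
    ring
  rw [e1, e2]
  have h1 : Complex.I * (2 * (n : ℂ) + 1) * (α : ℂ) / 2
        + -(Complex.I * (2 * (m : ℂ) + 1) * (α : ℂ) / 2)
      = Complex.I * ((n : ℂ) - (m : ℂ)) * (α : ℂ) := by ring
  have h2 : (-(Complex.I * (t : ℂ) * (Q : ℂ) ^ 2 / (4 * (τ : ℂ) * (s : ℂ) ^ 2))
        - ((Q ^ 2 / (4 * s ^ 2) : ℝ) : ℂ))
        + (Complex.I * (t : ℂ) * (Q : ℂ) ^ 2 / (4 * (τ : ℂ) * (s : ℂ) ^ 2)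
        - ((Q ^ 2 / (4 * s ^ 2) : ℝ) : ℂ))
      = ((-(Q ^ 2 / (2 * s ^ 2)) : ℝ) : ℂ) := by
    push_cast
    field_simp
    ring
  have hb : ((1 / Real.sqrt s : ℝ) : ℂ) * ((1 / Real.sqrt s : ℝ) : ℂ)
      = ((1 / s : ℝ) : ℂ) := by
    rw [← Complex.ofReal_mul]
    congr 1
    rw [div_mul_div_comm, one_mul, Real.mul_self_sqrt hs.le]
  calc _ = (Complex.exp (Complex.I * (2 * (n : ℂ) + 1) * (α : ℂ) / 2)
          * Complex.exp (-(Complex.I * (2 * (m : ℂ) + 1) * (α : ℂ) / 2)))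
        * ((Complex.exp (-(Complex.I * (t : ℂ) * (Q : ℂ) ^ 2 / (4 * (τ : ℂ) * (s : ℂ) ^ 2))
            - ((Q ^ 2 / (4 * s ^ 2) : ℝ) : ℂ)))
          * Complex.exp (Complex.I * (t : ℂ) * (Q : ℂ) ^ 2 / (4 * (τ : ℂ) * (s : ℂ) ^ 2)
            - ((Q ^ 2 / (4 * s ^ 2) : ℝ) : ℂ)))
        * (((1 / Real.sqrt ((n.factorial : ℝ) * Real.sqrt (2 * Real.pi)) : ℝ) : ℂ)
          * ((1 / Real.sqrt ((m.factorial : ℝ) * Real.sqrt (2 * Real.pi)) : ℝ) : ℂ)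
          * (((1 / Real.sqrt s : ℝ) : ℂ) * ((1 / Real.sqrt s : ℝ) : ℂ))
          * ((He n (Q / s) : ℝ) : ℂ) * ((He m (Q / s) : ℝ) : ℂ)) := by ring
    _ = _ := by
        rw [← Complex.exp_add, ← Complex.exp_add, h1, h2, hb]
        push_cast
        ring

end ChiAux

/-- At every fixed time `t`, the Gauss–Hermite wave packets are orthonormal in
`L²(ℝ, dQ)`: `∫ conj(χ_n(t,Q))·χ_m(t,Q) dQ = δ_{nm}`; in particular each packet
stays normalized, `∫ |χ_n(t,Q)|² dQ = 1`, at all times `t`. -/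
theorem chi_orthonormal (M τ : ℝ) (hM : 0 < M) (hτ : 0 < τ) (t : ℝ) :
    (∀ n m : ℕ,
      Integrable (fun Q : ℝ => (starRingEnd ℂ) (chi M τ n t Q) * chi M τ m t Q) ∧
      ∫ Q : ℝ, (starRingEnd ℂ) (chi M τ n t Q) * chi M τ m t Q
        = if n = m then 1 else 0) ∧
    ∀ n : ℕ, ∫ Q : ℝ, ‖chi M τ n t Q‖ ^ 2 = 1 := by
  have hs : 0 < sigmaT M τ t := by
    apply mul_pos
    · exact Real.sqrt_pos.2 (div_pos hτ (by linarith))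
    · exact Real.sqrt_pos.2 (by positivity)
  set s := sigmaT M τ t with hs_def
  have main : ∀ n m : ℕ,
      Integrable (fun Q : ℝ => (starRingEnd ℂ) (chi M τ n t Q) * chi M τ m t Q) ∧
      ∫ Q : ℝ, (starRingEnd ℂ) (chi M τ n t Q) * chi M τ m t Q
        = if n = m then 1 else 0 := by
    intro n m
    set α := Real.arctan (t / τ)
    set c : ℝ := (1 / Real.sqrt ((n.factorial : ℝ) * Real.sqrt (2 * Real.pi))) *
        (1 / Real.sqrt ((m.factorial : ℝ) * Real.sqrt (2 * Real.pi))) * (1 / s) with hc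
    set E : ℂ := Complex.exp (Complex.I * ((n : ℂ) - (m : ℂ)) * (α : ℂ)) with hE
    -- the real profile
    set F : ℝ → ℝ := fun y => (Polynomial.aeval y (Polynomial.hermite n)) *
        (Polynomial.aeval y (Polynomial.hermite m)) * ChiAux.g y with hF
    have hprof : ∀ Q : ℝ, He n (Q / s) * He m (Q / s) * Real.exp (-(Q ^ 2 / (2 * s ^ 2)))
        = F (Q / s) := by
      intro Q
      rw [hF]
      simp only [ChiAux.He_eq, ChiAux.g]
      rw [show -(Q ^ 2 / (2 * s ^ 2)) = -((Q / s) ^ 2 / 2) by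
        rw [div_pow, div_div, mul_comm]]
    have hFint : Integrable F := ChiAux.int_herm_mul_g n m
    have hFcomp : Integrable (fun Q : ℝ => F (Q / s)) :=
      (MeasureTheory.integrable_comp_div_iff F hs.ne').2 hFint
    have hkey : ∀ Q : ℝ, (starRingEnd ℂ) (chi M τ n t Q) * chi M τ m t Q
        = E * ((c * F (Q / s) : ℝ) : ℂ) := by
      intro Q
      rw [ChiAux.chi_mul M τ t n m Q hs, ← hprof Q]
    have hint : Integrable (fun Q : ℝ => (starRingEnd ℂ) (chi M τ n t Q) * chi M τ m t Q) := by
      refine (((hFcomp.const_mul c).ofReal (𝕜 := ℂ)).const_mul E).congr ?_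
      filter_upwards with Q
      exact (hkey Q).symm
    refine ⟨hint, ?_⟩
    have hFval : ∫ Q : ℝ, F (Q / s)
        = s * (if n = m then (n.factorial : ℝ) * Real.sqrt (2 * Real.pi) else 0) := by
      rw [MeasureTheory.Measure.integral_comp_div F s, ChiAux.herm_orth n m, abs_of_pos hs,
        smul_eq_mul]
    calc ∫ Q : ℝ, (starRingEnd ℂ) (chi M τ n t Q) * chi M τ m t Q
        = ∫ Q : ℝ, E * ((c * F (Q / s) : ℝ) : ℂ) := by
          exact integral_congr_ae (Filter.Eventually.of_forall hkey)
      _ = E * ((c * ∫ Q : ℝ, F (Q / s) : ℝ) : ℂ) := by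
          have hio : (∫ Q : ℝ, ((F (Q / s) : ℝ) : ℂ)) = ((∫ Q : ℝ, F (Q / s) : ℝ) : ℂ) :=
            integral_ofReal
          simp_rw [Complex.ofReal_mul]
          rw [MeasureTheory.integral_const_mul, MeasureTheory.integral_const_mul, hio]
      _ = if n = m then 1 else 0 := by
          rcases eq_or_ne n m with h | h
          · subst h
            rw [if_pos rfl, hFval, if_pos rfl]
            have hE1 : E = 1 := by
              rw [hE]
              simp
            rw [hE1, one_mul]
            have hx : (0 : ℝ) < (n.factorial : ℝ) * Real.sqrt (2 * Real.pi) := by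
              have : (0:ℝ) < Real.sqrt (2 * Real.pi) := Real.sqrt_pos.2 (by positivity)
              positivity
            rw [hc]
            norm_cast
            rw [div_mul_div_comm, one_mul, Real.mul_self_sqrt hx.le]
            field_simp
          · rw [if_neg h, hFval, if_neg h]
            simp
  refine ⟨main, ?_⟩
  intro n
  have h1 := (main n n).2
  rw [if_pos rfl] at h1
  have h2 : ∀ Q : ℝ, (starRingEnd ℂ) (chi M τ n t Q) * chi M τ n t Q
      = ((‖chi M τ n t Q‖ ^ 2 : ℝ) : ℂ) := by
    intro Q
    rw [mul_comm, Complex.mul_conj]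
    norm_cast
    simp [Complex.normSq_eq_norm_sq]
  have h3 : (∫ Q : ℝ, ((‖chi M τ n t Q‖ ^ 2 : ℝ) : ℂ)) = 1 := by
    rw [← integral_congr_ae (Filter.Eventually.of_forall h2)]
    exact h1
  have h4 : ((∫ Q : ℝ, ‖chi M τ n t Q‖ ^ 2 : ℝ) : ℂ) = 1 :=
    (integral_ofReal (𝕜 := ℂ) (f := fun Q => ‖chi M τ n t Q‖ ^ 2)).symm.trans h3
  exact_mod_cast h4
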